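/- arXiv:1704.01454 — 6 statements merged into one kernel-verified Lean document; each statement's English description precedes it below -/
import Mathlib

section
/- Let G be a finite simple graph and H an induced subgraph of G. Let C be the union of all vertex subsets of G that induce a subgraph isomorphic to H (the cover of H in G). Then |C| ≥ Anch(G), where Anch(G) is the anchor number of G. -/
/-- `A` is the vertex set of an anchor of `G`: a nonempty proper vertex subset such
that `A` is the unique vertex subset of `G` inducing a subgraph isomorphic to `G[A]`. -/
def IsAnchor {V : Type*} (G : SimpleGraph V) (A : Set V) : Prop :=
  A.Nonempty ∧ A ≠ Set.univ ∧
    ∀ S : Set V, Nonempty (G.induce S ≃g G.induce A) → S = A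

/-- The anchor number of `G`: the minimum order of an anchor of `G`,
taken to be `n = |V(G)|` if `G` has no anchor. -/
noncomputable def anchNum {V : Type*} [Fintype V] (G : SimpleGraph V) : ℕ :=
  sInf ({Fintype.card V} ∪ {k : ℕ | ∃ A : Set V, IsAnchor G A ∧ A.ncard = k})

/-! The cover `C` of `G[T]` is rigid: every copy of `G[C]` in `G` lies inside `C`, because it is
covered by the images of the copies of `G[T]` inside `C`, and these are again copies of `G[T]`.
Counting vertices, `C` is then the only vertex set inducing a copy of `G[C]`, so `C` is an anchor
unless `C = V(G)`, and in both cases `Anch(G) ≤ |C|`. -/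

namespace SimpleGraph

variable {V W : Type*} (G : SimpleGraph V) (H : SimpleGraph W)

def copyCover : Set V :=
  ⋃₀ {S : Set V | Nonempty (G.induce S ≃g H)}

variable {G H}

theorem range_subset_copyCover (f : H ↪g G) : Set.range f ⊆ G.copyCover H :=
  Set.subset_sUnion_of_mem ⟨f.isoInduceRange.symm⟩

theorem subset_copyCover_induce (T : Set V) : T ⊆ G.copyCover (G.induce T) :=
  fun x hx => range_subset_copyCover (Embedding.induce T) ⟨⟨x, hx⟩, rfl⟩

theorem range_subset_copyCover_of_induce_copyCover (f : G.induce (G.copyCover H) ↪g G) :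
    Set.range f ⊆ G.copyCover H := by
  rintro _ ⟨⟨c, S, ⟨φ⟩, hcS⟩, rfl⟩
  have hS : S ⊆ G.copyCover H := Set.subset_sUnion_of_mem ⟨φ⟩
  let g : H ↪g G := (f.comp (G.induceHomOfLE hS)).comp φ.symm.toEmbedding
  exact range_subset_copyCover g
    ⟨φ ⟨c, hcS⟩, congrArg f (congrArg (G.induceHomOfLE hS) (φ.symm_apply_apply _))⟩

theorem eq_copyCover_of_iso [Finite V] {S : Set V} (φ : G.induce S ≃g G.induce (G.copyCover H)) :
    S = G.copyCover H := by
  have hS : S ⊆ G.copyCover H := fun s hs =>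
    range_subset_copyCover_of_induce_copyCover ((Embedding.induce S).comp φ.symm.toEmbedding)
      ⟨φ ⟨s, hs⟩, congrArg Subtype.val (φ.symm_apply_apply _)⟩
  have hcard : S.ncard = (G.copyCover H).ncard := by
    simpa only [Nat.card_coe_set_eq] using Nat.card_congr φ.toEquiv
  exact Set.eq_of_subset_of_ncard_le hS hcard.ge

theorem isAnchor_copyCover [Finite V] (hne : (G.copyCover H).Nonempty)
    (hne_univ : G.copyCover H ≠ Set.univ) : IsAnchor G (G.copyCover H) :=
  ⟨hne, hne_univ, fun _ ⟨φ⟩ => eq_copyCover_of_iso φ⟩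

end SimpleGraph

theorem anchNum_le_card {V : Type*} [Fintype V] (G : SimpleGraph V) :
    anchNum G ≤ Fintype.card V :=
  Nat.sInf_le (Or.inl rfl)

theorem IsAnchor.anchNum_le_ncard {V : Type*} [Fintype V] {G : SimpleGraph V} {A : Set V}
    (hA : IsAnchor G A) : anchNum G ≤ A.ncard :=
  Nat.sInf_le (Or.inr ⟨A, hA, rfl⟩)

/-- The cover of an induced subgraph `G[T]` in `G`, i.e. the union of all vertex
subsets inducing a subgraph isomorphic to `G[T]`, has at least `Anch(G)` vertices. -/
theorem anchNum_le_ncard_cover {V : Type*} [Fintype V] (G : SimpleGraph V)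
    (T : Set V) (hT : T.Nonempty) :
    anchNum G ≤ (⋃₀ {S : Set V | Nonempty (G.induce S ≃g G.induce T)}).ncard := by
  change anchNum G ≤ (G.copyCover (G.induce T)).ncard
  by_cases hC : G.copyCover (G.induce T) = Set.univ
  · rw [hC, Set.ncard_univ, Nat.card_eq_fintype_card]
    exact anchNum_le_card G
  · exact (SimpleGraph.isAnchor_copyCover
      (hT.mono (SimpleGraph.subset_copyCover_induce T)) hC).anchNum_le_ncard
end

section
/- If a finite simple graph G has no anchor (i.e., every proper induced subgraph of G occurs at least twice up to isomorphism of induced subgraphs), then for every nonempty vertex subset T ⊆ V(G), the union of all vertex subsets S with G[S] ≅ G[T] equals all of V(G). In other words, in an anchor-free graph, the copies of any induced subgraph cover every vertex. -/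
/-- In an anchor-free graph (every nonempty proper induced subgraph occurs at least
twice), the copies of any nonempty induced subgraph `G[T]` cover every vertex of `G`:
the union of all vertex subsets inducing a copy of `G[T]` is all of `V(G)`. -/
theorem cover_eq_univ_of_anchorFree {V : Type*} [Fintype V] (G : SimpleGraph V)
    (hfree : ∀ T : Set V, T.Nonempty → T ≠ Set.univ →
      ∃ S : Set V, S ≠ T ∧ Nonempty (G.induce S ≃g G.induce T)) :
    ∀ T : Set V, T.Nonempty →
      ⋃₀ {S : Set V | Nonempty (G.induce S ≃g G.induce T)} = Set.univ := by
  classical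
  intro T hT
  by_contra hne
  set U : Set V := ⋃₀ {S : Set V | Nonempty (G.induce S ≃g G.induce T)} with hUdef
  have hTU : T ⊆ U := Set.subset_sUnion_of_mem ⟨RelIso.refl _⟩
  have hUne : U.Nonempty := hT.mono hTU
  obtain ⟨S, hSne, ⟨φ⟩⟩ := hfree U hUne hne
  let ψ : G.induce U ≃g G.induce S := φ.symm
  have hadj : ∀ x y : ↥U, G.Adj ((ψ x : V)) ((ψ y : V)) ↔ G.Adj (x : V) (y : V) := by
    intro x y
    simpa using ψ.map_rel_iff (a := x) (b := y)
  -- key: ψ maps U into U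
  have key : ∀ x : ↥U, (ψ x : V) ∈ U := by
    intro x
    obtain ⟨C, hC𝒮, hxC⟩ := x.2
    have hCU : C ⊆ U := Set.subset_sUnion_of_mem hC𝒮
    set F : V → V := fun v => if h : v ∈ U then (ψ ⟨v, h⟩ : V) else v with hF
    have hFval : ∀ (v : V) (h : v ∈ U), F v = (ψ ⟨v, h⟩ : V) := by
      intro v h; simp [hF, dif_pos h]
    have hinj : Set.InjOn F C := by
      intro a ha b hb hab
      rw [hFval a (hCU ha), hFval b (hCU hb)] at hab
      have := ψ.toEquiv.injective (Subtype.ext hab)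
      exact congrArg Subtype.val this
    let e : ↥C ≃ ↥(F '' C) := Equiv.Set.imageOfInjOn F C hinj
    have iso : G.induce C ≃g G.induce (F '' C) := by
      refine ⟨e, ?_⟩
      intro a b
      have h1 : ((e a : ↥(F '' C)) : V) = F a := rfl
      have h2 : ((e b : ↥(F '' C)) : V) = F b := rfl
      simp only [SimpleGraph.comap_adj, Function.Embedding.coe_subtype, h1, h2]
      rw [hFval (a : V) (hCU a.2), hFval (b : V) (hCU b.2)]
      exact hadj _ _
    obtain ⟨ι⟩ := hC𝒮
    have hmem : F '' C ∈ {S : Set V | Nonempty (G.induce S ≃g G.induce T)} :=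
      ⟨iso.symm.trans ι⟩
    have hx' : F (x : V) ∈ F '' C := Set.mem_image_of_mem F hxC
    have : F (x : V) = (ψ x : V) := by
      rw [hFval (x : V) x.2]
    rw [this] at hx'
    exact Set.mem_sUnion.2 ⟨F '' C, hmem, hx'⟩
  -- hence S ⊆ U
  have hSU : S ⊆ U := by
    intro s hs
    have : (⟨s, hs⟩ : ↥S) = ψ (ψ.toEquiv.symm ⟨s, hs⟩) := (ψ.toEquiv.apply_symm_apply _).symm
    have h2 := key (ψ.toEquiv.symm ⟨s, hs⟩)
    rwa [← this] at h2
  -- equal cardinalities force S = U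
  have hcard : U.ncard ≤ S.ncard := by
    have h := Nat.card_congr ψ.toEquiv
    rw [Nat.card_coe_set_eq, Nat.card_coe_set_eq] at h
    exact h.le
  exact hSne (Set.eq_of_subset_of_ncard_le hSU hcard (Set.toFinite U))
end

section
/- Let G be a finite simple graph and let H = G[A] be an anchor of G with vertex set A ⊊ V(G). If H' = (G\A)[B] is an anchor of the residue G\A (the induced subgraph on V(G) − A), where B ⊆ V(G) − A, then the induced subgraph G[A ∪ B] is an anchor of G, provided A ∪ B ≠ V(G). -/
noncomputable def restrictIso {V : Type*} (G : SimpleGraph V) {S T : Set V}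
    (e : G.induce S ≃g G.induce T) (Q : Set V) (hQ : Q ⊆ T) :
    G.induce {v : V | ∃ h : v ∈ S, (↑(e ⟨v, h⟩) : V) ∈ Q} ≃g G.induce Q where
  toFun x := ⟨↑(e ⟨x.1, x.2.choose⟩), x.2.choose_spec⟩
  invFun y := ⟨↑(e.symm ⟨y.1, hQ y.2⟩), (e.symm ⟨y.1, hQ y.2⟩).2, by
    simp only [Subtype.coe_eta, RelIso.apply_symm_apply]
    exact y.2⟩
  left_inv x := by
    apply Subtype.ext
    simp only [Subtype.coe_eta, RelIso.symm_apply_apply]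
  right_inv y := by
    apply Subtype.ext
    simp only [Subtype.coe_eta, RelIso.apply_symm_apply]
  map_rel_iff' := by
    intro a b
    simp only [SimpleGraph.comap_adj, Function.Embedding.coe_subtype, Equiv.coe_fn_mk]
    exact e.map_rel_iff

/-- Anchor extension via an anchor of the residue: if `G[A]` is an anchor of `G` and
`B ⊆ V(G) − A` is the vertex set of an anchor of the residue `G[V(G) − A]` (i.e. `B` is
the unique subset of `V(G) − A` inducing a subgraph isomorphic to `G[B]`), and
`A ∪ B ≠ V(G)`, then `G[A ∪ B]` is an anchor of `G`. -/
theorem anchor_extend_residue {V : Type*} [Fintype V] (G : SimpleGraph V) (A B : Set V)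
    (hA : IsAnchor G A) (hBsub : B ⊆ Aᶜ) (hBne : B.Nonempty) (hBproper : B ≠ Aᶜ)
    (hres : ∀ S : Set V, S ⊆ Aᶜ → Nonempty (G.induce S ≃g G.induce B) → S = B)
    (hu : A ∪ B ≠ Set.univ) :
    IsAnchor G (A ∪ B) := by
  obtain ⟨hAne, hAuniv, hAuniq⟩ := hA
  refine ⟨hAne.mono Set.subset_union_left, hu, ?_⟩
  rintro S ⟨e⟩
  set T1 : Set V := {v : V | ∃ h : v ∈ S, (↑(e ⟨v, h⟩) : V) ∈ A} with hT1
  set T2 : Set V := {v : V | ∃ h : v ∈ S, (↑(e ⟨v, h⟩) : V) ∈ B} with hT2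
  have hT1A : T1 = A := hAuniq T1 ⟨restrictIso G e A Set.subset_union_left⟩
  have hT2B : T2 = B := by
    refine hres T2 ?_ ⟨restrictIso G e B Set.subset_union_right⟩
    intro v hv
    rw [Set.mem_compl_iff, ← hT1A]
    obtain ⟨h, hB⟩ := hv
    rintro ⟨h', hA'⟩
    exact hBsub hB hA'
  ext v
  constructor
  · intro hv
    have := (e ⟨v, hv⟩).2
    rcases this with h | h
    · exact Or.inl (hT1A ▸ ⟨hv, h⟩)
    · exact Or.inr (hT2B ▸ ⟨hv, h⟩)
  · rintro (h | h)
    · rw [← hT1A] at h; exact h.choose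
    · rw [← hT2B] at h; exact h.choose
end

section
/- Let G be a finite simple graph with maximal anchor H = G[A] (an anchor that cannot be extended to an anchor on a strictly larger vertex set, and with |V(G) − A| ≥ 2). Then the residue G[V(G) − A] is anchor-free: every proper induced subgraph of G[V(G) − A] occurs at least twice in G[V(G) − A]. -/
/-- Pulling back a subset `W ⊆ U` along an isomorphism of induced subgraphs gives an
isomorphic induced subgraph. -/
lemma preimage_iso {V : Type*} (G : SimpleGraph V) {S U : Set V}
    (φ : G.induce S ≃g G.induce U) (W : Set V) (hW : W ⊆ U) :
    Nonempty (G.induce {v : V | ∃ h : v ∈ S, ((φ ⟨v, h⟩ : ↥U) : V) ∈ W} ≃g G.induce W) := by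
  classical
  refine ⟨⟨⟨fun x => ⟨(φ ⟨x.1, x.2.choose⟩ : V), x.2.choose_spec⟩,
    fun w => ⟨(φ.symm ⟨w.1, hW w.2⟩ : V), ?_⟩, ?_, ?_⟩, ?_⟩⟩
  · refine ⟨(φ.symm ⟨w.1, hW w.2⟩).2, ?_⟩
    have : (⟨((φ.symm ⟨w.1, hW w.2⟩ : ↥S) : V), (φ.symm ⟨w.1, hW w.2⟩).2⟩ : ↥S)
        = φ.symm ⟨w.1, hW w.2⟩ := rfl
    rw [this]
    simpa using w.2
  · intro x
    apply Subtype.ext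
    have : (⟨x.1, x.2.choose⟩ : ↥S) = ⟨x.1, x.2.choose⟩ := rfl
    show ((φ.symm ⟨((φ ⟨x.1, x.2.choose⟩ : ↥U) : V), _⟩ : ↥S) : V) = x.1
    have h2 : (⟨((φ ⟨x.1, x.2.choose⟩ : ↥U) : V), hW x.2.choose_spec⟩ : ↥U)
        = φ ⟨x.1, x.2.choose⟩ := rfl
    rw [h2]
    simp
  · intro w
    apply Subtype.ext
    show ((φ ⟨((φ.symm ⟨w.1, hW w.2⟩ : ↥S) : V), _⟩ : ↥U) : V) = w.1
    have h2 : (⟨((φ.symm ⟨w.1, hW w.2⟩ : ↥S) : V), (φ.symm ⟨w.1, hW w.2⟩).2⟩ : ↥S)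
        = φ.symm ⟨w.1, hW w.2⟩ := rfl
    rw [h2]
    simp
  · intro x y
    simp only [SimpleGraph.comap_adj, Function.Embedding.coe_subtype, Equiv.coe_fn_mk]
    have := φ.map_adj_iff (v := ⟨x.1, x.2.choose⟩) (w := ⟨y.1, y.2.choose⟩)
    simpa using this

/-- If `G[A]` is a maximal anchor of `G` (no anchor of `G` has a strictly larger vertex
set containing `A`) and the residue has at least two vertices, then the residue
`G[V(G) − A]` is anchor free: every nonempty proper induced subgraph of the residue
occurs at least twice within the residue. -/
theorem residue_anchorFree_of_maximal_anchor {V : Type*} [Fintype V] (G : SimpleGraph V)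
    (A : Set V) (hA : IsAnchor G A)
    (hmax : ∀ A' : Set V, A ⊂ A' → ¬ IsAnchor G A')
    (hres : 2 ≤ Aᶜ.ncard) :
    ∀ T : Set V, T ⊆ Aᶜ → T.Nonempty → T ≠ Aᶜ →
      ∃ S : Set V, S ⊆ Aᶜ ∧ S ≠ T ∧ Nonempty (G.induce S ≃g G.induce T) := by
  classical
  intro T hT hTne hTneq
  have hdisj : Disjoint A T := by
    rw [Set.disjoint_left]; intro a ha hat; exact (hT hat) ha
  -- A ∪ T is strictly larger than A
  have hssub : A ⊂ A ∪ T := by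
    constructor
    · exact Set.subset_union_left
    · intro h
      obtain ⟨t, ht⟩ := hTne
      exact (hT ht) (h (Or.inr ht))
  have hnotanchor := hmax (A ∪ T) hssub
  have h1 : (A ∪ T).Nonempty := hA.1.mono Set.subset_union_left
  have h2 : A ∪ T ≠ Set.univ := by
    intro h
    apply hTneq
    apply Set.Subset.antisymm hT
    intro v hv
    rcases (h ▸ Set.mem_univ v : v ∈ A ∪ T) with h' | h'
    · exact absurd h' hv
    · exact h'
  obtain ⟨S, hiso, hSne⟩ : ∃ S, Nonempty (G.induce S ≃g G.induce (A ∪ T)) ∧ S ≠ A ∪ T := by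
    by_contra h
    push_neg at h
    exact hnotanchor ⟨h1, h2, fun S hs => h S hs⟩
  obtain ⟨φ⟩ := hiso
  -- the preimage of A is A
  set B : Set V := {v : V | ∃ h : v ∈ S, ((φ ⟨v, h⟩ : ↥(A ∪ T)) : V) ∈ A} with hB
  have hBA : B = A := hA.2.2 B (preimage_iso G φ A Set.subset_union_left)
  -- the preimage of T is S \ A
  have hpreT : {v : V | ∃ h : v ∈ S, ((φ ⟨v, h⟩ : ↥(A ∪ T)) : V) ∈ T} = S \ A := by
    ext v
    constructor
    · rintro ⟨hv, hvt⟩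
      refine ⟨hv, fun hvA => ?_⟩
      have hvB : v ∈ B := hBA ▸ hvA
      obtain ⟨h', hA'⟩ := hvB
      exact hdisj.le_bot ⟨hA', hvt⟩
    · rintro ⟨hv, hvA⟩
      refine ⟨hv, ?_⟩
      rcases (φ ⟨v, hv⟩).2 with h' | h'
      · exact absurd (⟨hv, h'⟩ : v ∈ B) (fun hb => hvA (hBA ▸ hb))
      · exact h'
  have hisoT := preimage_iso G φ T Set.subset_union_right
  rw [hpreT] at hisoT
  refine ⟨S \ A, ?_, ?_, hisoT⟩
  · intro v hv; exact hv.2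
  · intro h
    apply hSne
    have hAS : A ⊆ S := by
      intro a ha
      have : a ∈ B := hBA ▸ ha
      exact this.choose
    rw [← h]
    ext v
    constructor
    · intro hv
      by_cases hva : v ∈ A
      · exact Or.inl hva
      · exact Or.inr ⟨hv, hva⟩
    · rintro (hv | hv)
      · exact hAS hv
      · exact hv.1
end

section
/- Let G be a finite simple graph, A ⊊ V(G) the vertex set of an anchor H = G[A], and suppose B ⊆ V(G) − A is such that the multiset of shadows {N(b) ∩ A : b ∈ B} is a shadow anchor: for every B' ⊆ V(G) − A with B' ≠ B, there is no automorphism φ of H with {φ(N(b) ∩ A) : b ∈ B} = {N(b') ∩ A : b' ∈ B'} (as multisets) together with G[B] ≅ G[B'] compatibly extending to an isomorphism of G[A ∪ B] and G[A ∪ B']. Then, if A ∪ B ≠ V(G), the induced subgraph G[A ∪ B] is an anchor of G. -/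
/-!
An isomorphism `ψ : G[S] ≃ G[A ∪ B]` pulls `A` back to a subset of `S` inducing a copy of
`G[A]`, which by uniqueness of the anchor is `A` itself. Hence `ψ` restricts to an automorphism
`φ` of `G[A]` and to a bijection `S \ A ≃ B`, and adjacency between `S \ A` and `A` is carried
along, so `φ⁻¹` matches the shadows of `B` with those of `S \ A`. The shadow-anchor hypothesis
then forces `S \ A = B`, that is, `S = A ∪ B`.
-/

namespace SimpleGraph

variable {V : Type*} {G : SimpleGraph V}

def shadow (G : SimpleGraph V) (A : Set V) (v : V) : Set A := {a | G.Adj v a}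

namespace Iso

variable {S T U U' : Set V} (ψ : G.induce S ≃g G.induce T) (hU : U ⊆ S) (hU' : U' ⊆ T)
  (hmem : ∀ v (h : v ∈ S), v ∈ U ↔ (ψ ⟨v, h⟩ : V) ∈ U')

def restrict : G.induce U ≃g G.induce U' where
  toFun u := ⟨ψ ⟨u, hU u.2⟩, (hmem u (hU u.2)).1 u.2⟩
  invFun u := ⟨ψ.symm ⟨u, hU' u.2⟩, (hmem _ (ψ.symm ⟨u, hU' u.2⟩).2).2 (by simp)⟩
  left_inv u := by ext; simp
  right_inv u := by ext; simp
  map_rel_iff' := ψ.map_rel_iff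

theorem image_restrict_symm_shadow (v : S) :
    ⇑(ψ.restrict hU hU' hmem).symm '' G.shadow U' (ψ v) = G.shadow U v := by
  rw [Set.image_eq_preimage_of_inverse (ψ.restrict hU hU' hmem).apply_symm_apply
    (ψ.restrict hU hU' hmem).symm_apply_apply]
  ext u
  exact ψ.map_rel_iff

end Iso

end SimpleGraph

theorem IsAnchor.subset_and_mem_iff_of_iso {V : Type*} {G : SimpleGraph V} {A S T : Set V}
    (hA : IsAnchor G A) (ψ : G.induce S ≃g G.induce T) (hAT : A ⊆ T) :
    A ⊆ S ∧ ∀ v (h : v ∈ S), v ∈ A ↔ (ψ ⟨v, h⟩ : V) ∈ A := by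
  set A' : Set V := {v | ∃ h : v ∈ S, (ψ ⟨v, h⟩ : V) ∈ A}
  have hA'S : A' ⊆ S := fun v hv => hv.1
  have hmem : ∀ v (h : v ∈ S), v ∈ A' ↔ (ψ ⟨v, h⟩ : V) ∈ A :=
    fun v h => ⟨fun ⟨_, hv⟩ => hv, fun hv => ⟨h, hv⟩⟩
  have hA' : A' = A := hA.2.2 A' ⟨ψ.restrict hA'S hAT hmem⟩
  rw [hA'] at hA'S hmem
  exact ⟨hA'S, hmem⟩

theorem anchor_extend_shadow_anchor_general {V : Type*} (G : SimpleGraph V)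
    (A B : Set V) (hA : IsAnchor G A) (hB : B ⊆ Aᶜ)
    (hshadow : ∀ B' : Set V, B' ⊆ Aᶜ → B' ≠ B →
      ∀ φ : G.induce A ≃g G.induce A,
        ¬ ∃ β : ↥B ≃ ↥B', ∀ b : ↥B,
          ⇑φ '' {a : ↥A | G.Adj (b : V) (a : V)} = {a : ↥A | G.Adj ((β b : ↥B') : V) (a : V)})
    (hu : A ∪ B ≠ Set.univ) :
    IsAnchor G (A ∪ B) := by
  refine ⟨hA.1.mono Set.subset_union_left, hu, fun S ⟨ψ⟩ => ?_⟩
  obtain ⟨hAS, hmemA⟩ := hA.subset_and_mem_iff_of_iso ψ Set.subset_union_left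
  have hmemB : ∀ v (h : v ∈ S), v ∈ S \ A ↔ (ψ ⟨v, h⟩ : V) ∈ B := fun v h => by
    have hψv : (ψ ⟨v, h⟩ : V) ∈ A ∪ B := (ψ ⟨v, h⟩).2
    rw [Set.mem_sdiff, hmemA v h]
    exact ⟨fun ⟨_, hv⟩ => hψv.resolve_left hv, fun hv => ⟨h, hB hv⟩⟩
  let φ := ψ.restrict hAS Set.subset_union_left hmemA
  let β := ψ.restrict Set.sdiff_subset Set.subset_union_right hmemB
  have hSA : S \ A = B := by
    by_contra hne
    refine hshadow (S \ A) (fun v hv => hv.2) hne φ.symm ⟨β.symm.toEquiv, fun b => ?_⟩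
    have hψ : (ψ ⟨β.symm b, (β.symm b).2.1⟩ : V) = b :=
      congrArg Subtype.val (β.apply_symm_apply b)
    exact hψ ▸
      ψ.image_restrict_symm_shadow hAS Set.subset_union_left hmemA ⟨β.symm b, (β.symm b).2.1⟩
  rw [← Set.union_sdiff_cancel hAS, hSA]

/-- Anchor extension via a shadow anchor: let `G[A]` be an anchor of `G` and
`B ⊆ V(G) − A` a set whose multiset of shadows on `A` is a shadow anchor, in the sense
that for every `B' ⊆ V(G) − A` with `B' ≠ B` no automorphism `φ` of `G[A]` maps the
shadows of the vertices of `B` (matched by some bijection `β : B ≃ B'`) onto the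
shadows of the vertices of `B'`. Then, if `A ∪ B ≠ V(G)`, the induced subgraph
`G[A ∪ B]` is an anchor of `G`. -/
theorem anchor_extend_shadow_anchor {V : Type*} [Fintype V] (G : SimpleGraph V)
    (A B : Set V) (hA : IsAnchor G A) (hB : B ⊆ Aᶜ)
    (hshadow : ∀ B' : Set V, B' ⊆ Aᶜ → B' ≠ B →
      ∀ φ : G.induce A ≃g G.induce A,
        ¬ ∃ β : ↥B ≃ ↥B', ∀ b : ↥B,
          ⇑φ '' {a : ↥A | G.Adj (b : V) (a : V)} = {a : ↥A | G.Adj ((β b : ↥B') : V) (a : V)})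
    (hu : A ∪ B ≠ Set.univ) :
    IsAnchor G (A ∪ B) :=
  anchor_extend_shadow_anchor_general G A B hA hB hshadow hu
end

section
/- If G is a finite simple graph on n vertices such that all induced subgraphs on n − 3 vertices are pairwise non-isomorphic, then every induced subgraph of G on n − 2 vertices is an anchor (unique) and is asymmetric (has trivial automorphism group). -/
namespace SimpleGraph

variable {V : Type*} {G : SimpleGraph V} {S T : Set V}

def PairwiseNonIsoInduced (G : SimpleGraph V) (k : ℕ) : Prop :=
  ∀ S T : Set V, S.ncard = k → T.ncard = k → S ≠ T → IsEmpty (G.induce S ≃g G.induce T)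

lemma ncard_eq_of_iso_induce (φ : G.induce S ≃g G.induce T) : S.ncard = T.ncard := by
  rw [← Nat.card_coe_set_eq, ← Nat.card_coe_set_eq]
  exact Nat.card_congr φ.toEquiv

lemma Iso.nonempty_induce_diff_singleton (φ : G.induce S ≃g G.induce T) (s : S) :
    Nonempty (G.induce (S \ {(s : V)}) ≃g G.induce (T \ {(φ s : V)})) := by
  let f : G.induce (S \ {(s : V)}) ↪g G :=
    (Embedding.induce T).comp (φ.toEmbedding.comp (G.induceHomOfLE Set.sdiff_subset))
  have hf : Set.range f = T \ {(φ s : V)} := by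
    ext v
    constructor
    · rintro ⟨x, rfl⟩
      refine ⟨(φ _).2, fun hx => x.2.2 ?_⟩
      exact congrArg Subtype.val (φ.injective (Subtype.ext hx))
    · rintro ⟨hvT, hvs⟩
      refine ⟨⟨φ.symm ⟨v, hvT⟩, (φ.symm ⟨v, hvT⟩).2, fun hx => hvs ?_⟩, ?_⟩
      · rw [← show φ.symm ⟨v, hvT⟩ = s from Subtype.ext hx, φ.apply_symm_apply]
        rfl
      · simp [f]
  rw [← hf]
  exact ⟨f.isoInduceRange⟩

namespace PairwiseNonIsoInduced

variable {k : ℕ}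

lemma diff_singleton_eq (hG : G.PairwiseNonIsoInduced k) (hS : S.ncard = k + 1)
    (φ : G.induce S ≃g G.induce T) (s : S) : S \ {(s : V)} = T \ {(φ s : V)} := by
  have hT : T.ncard = k + 1 := (ncard_eq_of_iso_induce φ).symm.trans hS
  by_contra hne
  obtain ⟨ψ⟩ := φ.nonempty_induce_diff_singleton s
  refine (hG _ _ ?_ ?_ hne).false ψ
  · rw [Set.ncard_sdiff_singleton_of_mem s.2, hS, Nat.add_sub_cancel]
  · rw [Set.ncard_sdiff_singleton_of_mem (φ s).2, hT, Nat.add_sub_cancel]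

lemma iso_apply_eq_self (hG : G.PairwiseNonIsoInduced k) (hS : S.ncard = k + 1)
    (φ : G.induce S ≃g G.induce S) (x : S) : φ x = x := by
  by_contra hx
  have hφx : (φ x : V) ∈ S \ {(x : V)} := ⟨(φ x).2, fun h => hx (Subtype.ext h)⟩
  rw [hG.diff_singleton_eq hS φ x] at hφx
  exact hφx.2 rfl

lemma eq_of_iso (hG : G.PairwiseNonIsoInduced k) (hk : 0 < k) (hS : S.ncard = k + 1)
    (φ : G.induce S ≃g G.induce T) : S = T := by
  have hST : S.ncard = T.ncard := ncard_eq_of_iso_induce φ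
  have hsub : S ⊆ T := by
    intro v hv
    obtain ⟨t, ht, htv⟩ := Set.exists_ne_of_one_lt_ncard (s := S) (by omega) v
    have hv' : v ∈ S \ {t} := ⟨hv, htv.symm⟩
    rw [hG.diff_singleton_eq hS φ ⟨t, ht⟩] at hv'
    exact hv'.1
  exact Set.eq_of_subset_of_ncard_le hsub hST.ge (Set.finite_of_ncard_ne_zero (s := T) (by omega))

end PairwiseNonIsoInduced

end SimpleGraph

/-- If all `(n−3)`-vertex induced subgraphs of an `n`-vertex graph `G` (with `n ≥ 4`)
are pairwise non-isomorphic, then every `(n−2)`-vertex induced subgraph of `G` is an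
anchor and is asymmetric (its only automorphism is the identity). -/
theorem anchor_and_asymmetric_of_distinct_n_sub_three {V : Type*} [Fintype V]
    (G : SimpleGraph V) (hn : 4 ≤ Fintype.card V)
    (h : ∀ S T : Set V, S.ncard = Fintype.card V - 3 → T.ncard = Fintype.card V - 3 →
      S ≠ T → IsEmpty (G.induce S ≃g G.induce T)) :
    ∀ A : Set V, A.ncard = Fintype.card V - 2 →
      IsAnchor G A ∧ ∀ φ : G.induce A ≃g G.induce A, ∀ x : ↥A, φ x = x := by
  have hG : G.PairwiseNonIsoInduced (Fintype.card V - 3) := h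
  intro A hA
  have hA' : A.ncard = Fintype.card V - 3 + 1 := by omega
  refine ⟨⟨Set.nonempty_of_ncard_ne_zero (by omega), ?_, ?_⟩, hG.iso_apply_eq_self hA'⟩
  · rintro rfl
    rw [Set.ncard_univ, Nat.card_eq_fintype_card] at hA
    omega
  · rintro S ⟨φ⟩
    exact hG.eq_of_iso (by omega) ((SimpleGraph.ncard_eq_of_iso_induce φ).trans hA') φ
end
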